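/- arXiv:1910.08222 — 3 statements merged into one kernel-verified Lean document; each statement's English description precedes it below -/
import Mathlib

section
/- If F is β-smooth for some β > 0, then for every w ∈ ℝ^d, every step size γ > 0, and every batch size B ≥ 1, the expected one-step mini-batch SGD descent satisfies E_s[F(w − γ g_s(w))] ≤ F(w) − γ‖∇F(w)‖² + (βγ²/2)·(M²(w)/B + ((B − 1)/B)·‖∇F(w)‖²). -/
open scoped BigOperators RealInnerProductSpace

/-!
Smoothness bounds `F (w - γ x)` by `F w - γ ⟪∇F w, x⟫ + β γ² / 2 ‖x‖²` for every direction `x`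
(the slope of `F` along a segment grows at most linearly), and averaging this over the `n ^ B`
tuples `s` leaves the first two moments of the mini-batch gradient `g_s(w)`. Its mean is `∇F w`,
and its second moment is `M²(w) / B + (B - 1) / B ‖∇F w‖²`: the `B` diagonal terms of
`‖∑ j, ∇f_{s j}‖²` each average to `M²`, the `B (B - 1)` off-diagonal ones to `‖∇F w‖²`. Both
moments are computed by induction on `B`, splitting off the first entry of the tuple.
-/

section Gradient

variable {E : Type*} [NormedAddCommGroup E] [InnerProductSpace ℝ E] [CompleteSpace E]
  {F : E → ℝ} {β : ℝ}

theorem gradient_const_mul_sum {ι : Type*} [Fintype ι] {f : ι → E → ℝ} {w : E}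
    (hf : ∀ i, DifferentiableAt ℝ (f i) w) (c : ℝ) :
    gradient (fun x => c * ∑ i, f i x) w = c • ∑ i, gradient (f i) w := by
  refine HasGradientAt.gradient ?_
  rw [hasGradientAt_iff_hasFDerivAt, map_smul, map_sum]
  exact (HasFDerivAt.fun_sum fun i _ =>
    hasGradientAt_iff_hasFDerivAt.mp (hf i).hasGradientAt).const_mul c

theorem le_add_inner_gradient_add_norm_sq (hF : Differentiable ℝ F)
    (hL : ∀ x y, ‖gradient F x - gradient F y‖ ≤ β * ‖x - y‖) (x v : E) :
    F (x + v) ≤ F x + ⟪gradient F x, v⟫ + β / 2 * ‖v‖ ^ 2 := by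
  have hφ : ∀ t : ℝ, HasDerivAt (fun t : ℝ => F (x + t • v)) ⟪gradient F (x + t • v), v⟫ t := by
    intro t
    have hline : HasDerivAt (fun t : ℝ => x + t • v) v t := by
      simpa using ((hasDerivAt_id t).smul_const v).const_add x
    simpa [Function.comp_def] using
      (hasGradientAt_iff_hasFDerivAt.mp (hF _).hasGradientAt).comp_hasDerivAt t hline
  have hslope : ∀ t : ℝ, 0 ≤ t →
      ⟪gradient F (x + t • v), v⟫ ≤ ⟪gradient F x, v⟫ + β * t * ‖v‖ ^ 2 := by
    intro t ht
    have hdiff : ‖gradient F (x + t • v) - gradient F x‖ ≤ β * (t * ‖v‖) := by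
      simpa [norm_smul, abs_of_nonneg ht] using hL (x + t • v) x
    have hcs := real_inner_le_norm (gradient F (x + t • v) - gradient F x) v
    rw [inner_sub_left] at hcs
    nlinarith [mul_le_mul_of_nonneg_right hdiff (norm_nonneg v)]
  set ψ : ℝ → ℝ := fun t => F (x + t • v) - t * ⟪gradient F x, v⟫ - β / 2 * ‖v‖ ^ 2 * t ^ 2
  have hψ : ∀ t : ℝ, HasDerivAt ψ
      (⟪gradient F (x + t • v), v⟫ - ⟪gradient F x, v⟫ - β * ‖v‖ ^ 2 * t) t := fun t =>
    (((hφ t).sub ((hasDerivAt_id t).mul_const _)).sub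
      ((hasDerivAt_pow 2 t).const_mul _)).congr_deriv (by simp; ring)
  have hanti : AntitoneOn ψ (Set.Icc 0 1) := by
    refine antitoneOn_of_hasDerivWithinAt_nonpos (convex_Icc 0 1)
      (HasDerivAt.continuousOn fun t _ => hψ t) (fun t _ => (hψ t).hasDerivWithinAt) ?_
    intro t ht
    rw [interior_Icc] at ht
    linarith [hslope t ht.1.le]
  have := hanti (by simp) (by simp) zero_le_one
  simp only [ψ, one_smul, zero_smul, add_zero] at this
  linarith

theorem mean_le_of_lipschitz_gradient {σ : Type*} [Fintype σ] [Nonempty σ]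
    (hF : Differentiable ℝ F) (hL : ∀ x y, ‖gradient F x - gradient F y‖ ≤ β * ‖x - y‖)
    (w : E) (γ : ℝ) (x : σ → E) :
    (1 / (Fintype.card σ : ℝ)) * ∑ s, F (w - γ • x s) ≤
      F w - γ * ⟪gradient F w, (1 / (Fintype.card σ : ℝ)) • ∑ s, x s⟫ +
        β * γ ^ 2 / 2 * ((1 / (Fintype.card σ : ℝ)) * ∑ s, ‖x s‖ ^ 2) := by
  have hstep : ∀ s, F (w - γ • x s) ≤
      F w - γ * ⟪gradient F w, x s⟫ + β * γ ^ 2 / 2 * ‖x s‖ ^ 2 := by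
    intro s
    have := le_add_inner_gradient_add_norm_sq hF hL w (-(γ • x s))
    rw [← sub_eq_add_neg, inner_neg_right, real_inner_smul_right, norm_neg, norm_smul,
      mul_pow, Real.norm_eq_abs, sq_abs] at this
    linarith
  have hcard : (0 : ℝ) < Fintype.card σ := by exact_mod_cast Fintype.card_pos
  have hsum := Finset.sum_le_sum fun s (_ : s ∈ Finset.univ) => hstep s
  rw [Finset.sum_add_distrib, Finset.sum_sub_distrib, Finset.sum_const, Finset.card_univ,
    nsmul_eq_mul, ← Finset.mul_sum, ← Finset.mul_sum, ← inner_sum] at hsum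
  rw [real_inner_smul_right]
  field_simp
  linarith

end Gradient

section Sampling

variable {α : Type*} [Fintype α]

theorem Fin.sum_pi_succ {M : Type*} [AddCommMonoid M] {B : ℕ} (φ : (Fin (B + 1) → α) → M) :
    ∑ s, φ s = ∑ a, ∑ t : Fin B → α, φ (Fin.cons a t) := by
  rw [← (Fin.consEquiv fun _ => α).sum_comp, Fintype.sum_prod_type]
  rfl

theorem card_smul_sum_sum_tuple {M : Type*} [AddCommMonoid M] (g : α → M) (B : ℕ) :
    Fintype.card α • ∑ s : Fin B → α, ∑ j, g (s j) =
      (B * Fintype.card α ^ B) • ∑ a, g a := by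
  induction B with
  | zero => simp
  | succ B ih =>
    have hsplit : ∑ s : Fin (B + 1) → α, ∑ j, g (s j) =
        Fintype.card α ^ B • ∑ a, g a + Fintype.card α • ∑ t : Fin B → α, ∑ j, g (t j) := by
      rw [Fin.sum_pi_succ]
      simp only [Fin.sum_univ_succ, Fin.cons_zero, Fin.cons_succ, Finset.sum_add_distrib,
        Finset.sum_const, Finset.card_univ, Fintype.card_fun, Fintype.card_fin, ← Finset.smul_sum]
    rw [hsplit, smul_add, ih, smul_smul, smul_smul, ← add_smul]
    congr 1
    ring

variable {E : Type*} [NormedAddCommGroup E] [InnerProductSpace ℝ E]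

theorem card_sq_mul_sum_norm_sq_sum_tuple (g : α → E) (B : ℕ) :
    (Fintype.card α : ℝ) ^ 2 * ∑ s : Fin B → α, ‖∑ j, g (s j)‖ ^ 2 =
      B * (Fintype.card α : ℝ) ^ (B + 1) * ∑ a, ‖g a‖ ^ 2 +
        B * (B - 1) * (Fintype.card α : ℝ) ^ B * ‖∑ a, g a‖ ^ 2 := by
  induction B with
  | zero => simp
  | succ B ih =>
    have hsplit : ∑ s : Fin (B + 1) → α, ‖∑ j, g (s j)‖ ^ 2 =
        (Fintype.card α : ℝ) ^ B * ∑ a, ‖g a‖ ^ 2 +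
          2 * ⟪∑ a, g a, ∑ t : Fin B → α, ∑ j, g (t j)⟫ +
          Fintype.card α * ∑ t : Fin B → α, ‖∑ j, g (t j)‖ ^ 2 := by
      rw [Fin.sum_pi_succ]
      simp only [Fin.sum_univ_succ, Fin.cons_zero, Fin.cons_succ, norm_add_sq_real,
        Finset.sum_add_distrib, Finset.sum_const, Finset.card_univ, Fintype.card_fun,
        Fintype.card_fin, nsmul_eq_mul, ← Finset.mul_sum, ← inner_sum, ← sum_inner]
      push_cast
      ring
    have hlin := card_smul_sum_sum_tuple g B
    rw [← Nat.cast_smul_eq_nsmul ℝ, ← Nat.cast_smul_eq_nsmul ℝ] at hlin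
    have hcross : (Fintype.card α : ℝ) * ⟪∑ a, g a, ∑ t : Fin B → α, ∑ j, g (t j)⟫ =
        B * (Fintype.card α : ℝ) ^ B * ‖∑ a, g a‖ ^ 2 := by
      rw [← real_inner_smul_right, hlin, real_inner_smul_right, real_inner_self_eq_norm_sq]
      push_cast
      ring
    rw [hsplit]
    push_cast
    linear_combination (2 * (Fintype.card α : ℝ)) * hcross + (Fintype.card α : ℝ) * ih

theorem inv_pow_smul_sum_batch_average [Nonempty α] {B : ℕ} (hB : B ≠ 0) (g : α → E) :
    (1 / (Fintype.card α : ℝ) ^ B) • ∑ s : Fin B → α, (1 / (B : ℝ)) • ∑ j, g (s j) =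
      (1 / (Fintype.card α : ℝ)) • ∑ a, g a := by
  have hcard : (Fintype.card α : ℝ) ≠ 0 := by exact_mod_cast Fintype.card_ne_zero
  have hlin := card_smul_sum_sum_tuple g B
  rw [← Nat.cast_smul_eq_nsmul ℝ, ← Nat.cast_smul_eq_nsmul ℝ] at hlin
  have hS : ∑ s : Fin B → α, ∑ j, g (s j) =
      (Fintype.card α : ℝ)⁻¹ • ((B * Fintype.card α ^ B : ℕ) : ℝ) • ∑ a, g a := by
    rw [← hlin, inv_smul_smul₀ hcard]
  rw [← Finset.smul_sum, hS]
  simp only [smul_smul]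
  congr 1
  push_cast
  field_simp

theorem inv_pow_mul_sum_norm_sq_batch_average [Nonempty α] {B : ℕ} (hB : B ≠ 0) (g : α → E) :
    (1 / (Fintype.card α : ℝ) ^ B) * ∑ s : Fin B → α, ‖(1 / (B : ℝ)) • ∑ j, g (s j)‖ ^ 2 =
      ((1 / (Fintype.card α : ℝ)) * ∑ a, ‖g a‖ ^ 2) / B +
        ((B - 1) / B) * ‖(1 / (Fintype.card α : ℝ)) • ∑ a, g a‖ ^ 2 := by
  have hcard : (Fintype.card α : ℝ) ≠ 0 := by exact_mod_cast Fintype.card_ne_zero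
  have hquad := card_sq_mul_sum_norm_sq_sum_tuple g B
  simp only [norm_smul, mul_pow, Real.norm_eq_abs, sq_abs, ← Finset.mul_sum]
  field_simp
  linear_combination hquad

end Sampling

theorem minibatch_descent_lemma_general
    (d n B : ℕ) (hn : 1 ≤ n) (hB : 1 ≤ B)
    (f : Fin n → EuclideanSpace ℝ (Fin d) → ℝ)
    (hf : ∀ i, Differentiable ℝ (f i))
    (F : EuclideanSpace ℝ (Fin d) → ℝ)
    (hF : F = fun w => (1 / (n : ℝ)) * ∑ i, f i w)
    (β : ℝ)
    (hFdiff : Differentiable ℝ F)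
    (hsmooth : ∀ x y, ‖gradient F x - gradient F y‖ ≤ β * ‖x - y‖)
    (w : EuclideanSpace ℝ (Fin d)) (γ : ℝ) :
    (1 / (n : ℝ) ^ B) *
        ∑ s : Fin B → Fin n,
          F (w - γ • ((1 / (B : ℝ)) • ∑ j, gradient (f (s j)) w))
      ≤ F w - γ * ‖gradient F w‖ ^ 2 +
          (β * γ ^ 2 / 2) *
            (((1 / (n : ℝ)) * ∑ i, ‖gradient (f i) w‖ ^ 2) / (B : ℝ) +
              (((B : ℝ) - 1) / (B : ℝ)) * ‖gradient F w‖ ^ 2) := by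
  have : Nonempty (Fin n) := ⟨⟨0, hn⟩⟩
  have hB0 : B ≠ 0 := Nat.one_le_iff_ne_zero.mp hB
  have hgrad : gradient F w = (1 / (n : ℝ)) • ∑ i, gradient (f i) w := by
    subst hF
    exact gradient_const_mul_sum (fun i => hf i w) _
  have hmean := mean_le_of_lipschitz_gradient hFdiff hsmooth w γ
    fun s : Fin B → Fin n => (1 / (B : ℝ)) • ∑ j, gradient (f (s j)) w
  have hunbiased := inv_pow_smul_sum_batch_average hB0 fun i => gradient (f i) w
  have hsecond := inv_pow_mul_sum_norm_sq_batch_average hB0 fun i => gradient (f i) w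
  simp only [Fintype.card_fin, ← hgrad] at hunbiased hsecond
  rw [Fintype.card_fun, Fintype.card_fin, Fintype.card_fin, Nat.cast_pow, hunbiased, hsecond,
    real_inner_self_eq_norm_sq] at hmean
  exact hmean

/-- If `F` is `β`-smooth, then for every `w`, step size `γ > 0`, and batch
size `B ≥ 1`, the expected one-step mini-batch SGD descent satisfies
`E_s[F(w − γ g_s(w))] ≤ F(w) − γ‖∇F(w)‖² + (βγ²/2)·(M²(w)/B + ((B − 1)/B)·‖∇F(w)‖²)`. -/
theorem minibatch_descent_lemma
    (d n B : ℕ) (hd : 1 ≤ d) (hn : 1 ≤ n) (hB : 1 ≤ B)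
    (f : Fin n → EuclideanSpace ℝ (Fin d) → ℝ)
    (hf : ∀ i, Differentiable ℝ (f i))
    (F : EuclideanSpace ℝ (Fin d) → ℝ)
    (hF : F = fun w => (1 / (n : ℝ)) * ∑ i, f i w)
    (β : ℝ) (hβ : 0 < β)
    (hFdiff : Differentiable ℝ F)
    (hsmooth : ∀ x y, ‖gradient F x - gradient F y‖ ≤ β * ‖x - y‖)
    (w : EuclideanSpace ℝ (Fin d)) (γ : ℝ) (hγ : 0 < γ) :
    (1 / (n : ℝ) ^ B) *
        ∑ s : Fin B → Fin n,
          F (w - γ • ((1 / (B : ℝ)) • ∑ j, gradient (f (s j)) w))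
      ≤ F w - γ * ‖gradient F w‖ ^ 2 +
          (β * γ ^ 2 / 2) *
            (((1 / (n : ℝ)) * ∑ i, ‖gradient (f i) w‖ ^ 2) / (B : ℝ) +
              (((B : ℝ) - 1) / (B : ℝ)) * ‖gradient F w‖ ^ 2) :=
  minibatch_descent_lemma_general d n B hn hB f hf F hF β hFdiff hsmooth w γ
end

section
/- Suppose F is β-smooth (β > 0). Let c' > 0, let w ∈ ℝ^d with ∇F(w) ≠ 0, let the batch size B ≥ 1 satisfy B·‖∇F(w)‖² ≥ c'·M²(w), and let γ > 0. Then ‖∇F(w)‖²·(γ − (βγ²/2)·(1/c' + 1)) ≤ F(w) − E_s[F(w − γ g_s(w))]. -/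
/-!
Each mini-batch step obeys the descent lemma
`F (w - γ g) ≤ F w - γ ⟪∇F w, g⟫ + β γ² ‖g‖² / 2`, which is affine in `g` and `‖g‖²`, so it
survives averaging over the `n ^ B` batches. Sampling with replacement makes the mini-batch
gradient unbiased, `E g_s = ∇F w`, with second moment
`E ‖g_s‖² = ‖∇F w‖² + (M² w - ‖∇F w‖²) / B` (by induction on `B`, peeling off the first sample),
and the batch-size condition bounds the excess `(M² w - ‖∇F w‖²) / B` by `‖∇F w‖² / c'`.
-/

open scoped BigOperators RealInnerProductSpace Gradient
open Finset InnerProductSpace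

section Descent

variable {E : Type*} [NormedAddCommGroup E] [InnerProductSpace ℝ E] [CompleteSpace E]
  {F : E → ℝ} {β : ℝ}

theorem hasGradientAt_const_mul_sum {ι : Type*} [Fintype ι] {f : ι → E → ℝ} {x : E}
    (hf : ∀ i, DifferentiableAt ℝ (f i) x) (c : ℝ) :
    HasGradientAt (fun y => c * ∑ i, f i y) (c • ∑ i, ∇ (f i) x) x := by
  rw [hasGradientAt_iff_hasFDerivAt, map_smul, map_sum]
  simp only [toDual_gradient]
  exact (HasFDerivAt.fun_sum fun i _ => (hf i).hasFDerivAt).const_mul c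

theorem apply_add_le_of_lipschitz_gradient (hF : Differentiable ℝ F)
    (hL : ∀ x y, ‖∇ F x - ∇ F y‖ ≤ β * ‖x - y‖) (x v : E) :
    F (x + v) ≤ F x + ⟪∇ F x, v⟫ + β / 2 * ‖v‖ ^ 2 := by
  set φ : ℝ → ℝ := fun t => F (x + t • v) - t * ⟪∇ F x, v⟫ - β / 2 * t ^ 2 * ‖v‖ ^ 2
  have hφ : ∀ t, HasDerivAt φ (⟪∇ F (x + t • v) - ∇ F x, v⟫ - β * t * ‖v‖ ^ 2) t := by
    intro t
    have hline : HasDerivAt (fun t : ℝ => x + t • v) v t := by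
      simpa using ((hasDerivAt_id t).smul_const v).const_add x
    have hF' := (hF _).hasGradientAt.hasFDerivAt.comp_hasDerivAt t hline
    refine ((hF'.sub ((hasDerivAt_id t).mul_const ⟪∇ F x, v⟫)).sub
      (((hasDerivAt_pow 2 t).const_mul (β / 2)).mul_const (‖v‖ ^ 2))).congr_deriv ?_
    simp only [toDual_apply_apply, inner_sub_left]
    ring
  have hφ' : ∀ t ∈ interior (Set.Icc (0 : ℝ) 1),
      ⟪∇ F (x + t • v) - ∇ F x, v⟫ - β * t * ‖v‖ ^ 2 ≤ 0 := by
    intro t ht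
    rw [interior_Icc] at ht
    have hstep : ‖∇ F (x + t • v) - ∇ F x‖ ≤ β * (t * ‖v‖) := by
      simpa [norm_smul, abs_of_pos ht.1] using hL (x + t • v) x
    nlinarith [real_inner_le_norm (∇ F (x + t • v) - ∇ F x) v,
      mul_le_mul_of_nonneg_right hstep (norm_nonneg v)]
  have hanti : AntitoneOn φ (Set.Icc 0 1) :=
    antitoneOn_of_hasDerivWithinAt_nonpos (convex_Icc 0 1)
      (fun t _ => (hφ t).continuousAt.continuousWithinAt) (fun t _ => (hφ t).hasDerivWithinAt) hφ'
  have h01 := hanti (Set.left_mem_Icc.2 zero_le_one) (Set.right_mem_Icc.2 zero_le_one) zero_le_one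
  simp only [φ, zero_smul, add_zero, one_smul, zero_mul, sub_zero, one_mul] at h01
  linarith

theorem mean_apply_sub_smul_le_of_lipschitz_gradient {S : Type*} [Fintype S] [Nonempty S]
    (hF : Differentiable ℝ F) (hL : ∀ x y, ‖∇ F x - ∇ F y‖ ≤ β * ‖x - y‖)
    (x : E) (γ : ℝ) (v : S → E) :
    (Fintype.card S : ℝ)⁻¹ * ∑ s, F (x - γ • v s)
      ≤ F x - γ * ⟪∇ F x, (Fintype.card S : ℝ)⁻¹ • ∑ s, v s⟫
        + β * γ ^ 2 / 2 * ((Fintype.card S : ℝ)⁻¹ * ∑ s, ‖v s‖ ^ 2) := by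
  have hpoint : ∀ s, F (x - γ • v s) ≤ F x - γ * ⟪∇ F x, v s⟫ + β * γ ^ 2 / 2 * ‖v s‖ ^ 2 := by
    intro s
    have := apply_add_le_of_lipschitz_gradient hF hL x (-(γ • v s))
    rw [← sub_eq_add_neg, inner_neg_right, real_inner_smul_right, norm_neg, norm_smul,
      Real.norm_eq_abs, mul_pow, sq_abs] at this
    linarith
  have hsum := sum_le_sum fun s (_ : s ∈ univ) => hpoint s
  simp only [sum_add_distrib, sum_sub_distrib, sum_const, card_univ, nsmul_eq_mul, ← mul_sum,
    ← inner_sum] at hsum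
  rw [real_inner_smul_right]
  calc (Fintype.card S : ℝ)⁻¹ * ∑ s, F (x - γ • v s)
      ≤ (Fintype.card S : ℝ)⁻¹ * (Fintype.card S * F x - γ * ⟪∇ F x, ∑ s, v s⟫
          + β * γ ^ 2 / 2 * ∑ s, ‖v s‖ ^ 2) := by gcongr
    _ = _ := by field_simp

end Descent

section Sampling

variable {ι : Type*} [Fintype ι]

theorem Fintype.sum_fin_succ_pi {M : Type*} [AddCommMonoid M] {B : ℕ}
    (φ : (Fin (B + 1) → ι) → M) :
    ∑ s, φ s = ∑ i, ∑ t : Fin B → ι, φ (Fin.cons i t) := by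
  rw [← (Fin.consEquiv fun _ => ι).sum_comp, Fintype.sum_prod_type]
  rfl

variable [Nonempty ι]

theorem sum_pi_sum_apply {E : Type*} [AddCommGroup E] [Module ℝ E] (G : ι → E) (B : ℕ) :
    ∑ s : Fin B → ι, ∑ j, G (s j)
      = ((B : ℝ) * Fintype.card ι ^ B) • (Fintype.card ι : ℝ)⁻¹ • ∑ i, G i := by
  set n : ℝ := (Fintype.card ι : ℝ)
  set m : E := n⁻¹ • ∑ i, G i
  have hsum : ∑ i, G i = n • m := by
    rw [smul_inv_smul₀ (by positivity : n ≠ 0)]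
  induction B with
  | zero => simp
  | succ B ih =>
    simp only [Fintype.sum_fin_succ_pi, Fin.sum_univ_succ, Fin.cons_zero, Fin.cons_succ,
      sum_add_distrib, sum_const, card_univ, Fintype.card_fun, Fintype.card_fin, ih,
      ← Nat.cast_smul_eq_nsmul ℝ, ← smul_sum, hsum]
    push_cast
    module

theorem sum_pi_norm_sum_apply_sq {E : Type*} [NormedAddCommGroup E] [InnerProductSpace ℝ E]
    (G : ι → E) (B : ℕ) :
    ∑ s : Fin B → ι, ‖∑ j, G (s j)‖ ^ 2
      = (Fintype.card ι : ℝ) ^ B * (B * (B - 1) * ‖(Fintype.card ι : ℝ)⁻¹ • ∑ i, G i‖ ^ 2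
          + B * ((Fintype.card ι : ℝ)⁻¹ * ∑ i, ‖G i‖ ^ 2)) := by
  set n : ℝ := (Fintype.card ι : ℝ)
  have hn : n ≠ 0 := by positivity
  set m : E := n⁻¹ • ∑ i, G i
  set q : ℝ := n⁻¹ * ∑ i, ‖G i‖ ^ 2
  have hsum : ∑ i, G i = n • m := by rw [smul_inv_smul₀ hn]
  have hsq : ∑ i, ‖G i‖ ^ 2 = n * q := by rw [mul_inv_cancel_left₀ hn]
  induction B with
  | zero => simp
  | succ B ih =>
    have hcross : ∑ i, ∑ t : Fin B → ι, ⟪G i, ∑ j, G (t j)⟫ = B * n ^ (B + 1) * ‖m‖ ^ 2 := by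
      calc ∑ i, ∑ t : Fin B → ι, ⟪G i, ∑ j, G (t j)⟫
          = ⟪n • m, ((B : ℝ) * n ^ B) • m⟫ := by
            simp_rw [← inner_sum, ← sum_inner, sum_pi_sum_apply, ← hsum]
            rfl
        _ = B * n ^ (B + 1) * ‖m‖ ^ 2 := by
            rw [real_inner_smul_left, real_inner_smul_right, real_inner_self_eq_norm_sq]
            ring
    simp only [Fintype.sum_fin_succ_pi, Fin.sum_univ_succ, Fin.cons_zero, Fin.cons_succ,
      norm_add_sq_real, sum_add_distrib, ← mul_sum, hcross, ih, sum_const, card_univ,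
      Fintype.card_fun, Fintype.card_fin, nsmul_eq_mul, hsq]
    push_cast
    ring

theorem mean_batch_mean {E : Type*} [AddCommGroup E] [Module ℝ E] (G : ι → E) {B : ℕ}
    (hB : B ≠ 0) :
    (Fintype.card (Fin B → ι) : ℝ)⁻¹ • ∑ s : Fin B → ι, (B : ℝ)⁻¹ • ∑ j, G (s j)
      = (Fintype.card ι : ℝ)⁻¹ • ∑ i, G i := by
  rw [Fintype.card_fun, Fintype.card_fin, Nat.cast_pow, ← smul_sum, sum_pi_sum_apply, smul_smul,
    smul_smul]
  field_simp
  rw [one_smul]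

theorem mean_norm_batch_mean_sq {E : Type*} [NormedAddCommGroup E] [InnerProductSpace ℝ E]
    (G : ι → E) {B : ℕ} (hB : B ≠ 0) :
    (Fintype.card (Fin B → ι) : ℝ)⁻¹ * ∑ s : Fin B → ι, ‖(B : ℝ)⁻¹ • ∑ j, G (s j)‖ ^ 2
      = ‖(Fintype.card ι : ℝ)⁻¹ • ∑ i, G i‖ ^ 2 + (B : ℝ)⁻¹ *
          ((Fintype.card ι : ℝ)⁻¹ * ∑ i, ‖G i‖ ^ 2 - ‖(Fintype.card ι : ℝ)⁻¹ • ∑ i, G i‖ ^ 2) := by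
  simp only [Fintype.card_fun, Fintype.card_fin, Nat.cast_pow, norm_smul, mul_pow, ← mul_sum,
    sum_pi_norm_sum_apply_sq, norm_inv, Real.norm_natCast]
  field_simp
  ring

end Sampling

theorem minibatch_smooth_descent_general
    (d n B : ℕ) (hn : 1 ≤ n) (hB : 1 ≤ B)
    (f : Fin n → EuclideanSpace ℝ (Fin d) → ℝ)
    (hf : ∀ i, Differentiable ℝ (f i))
    (F : EuclideanSpace ℝ (Fin d) → ℝ)
    (hF : F = fun w => (1 / (n : ℝ)) * ∑ i, f i w)
    (β : ℝ) (hβ : 0 < β)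
    (hFdiff : Differentiable ℝ F)
    (hsmooth : ∀ x y, ‖gradient F x - gradient F y‖ ≤ β * ‖x - y‖)
    (c' : ℝ) (hc' : 0 < c')
    (w : EuclideanSpace ℝ (Fin d))
    (hBc : c' * ((1 / (n : ℝ)) * ∑ i, ‖gradient (f i) w‖ ^ 2)
            ≤ (B : ℝ) * ‖gradient F w‖ ^ 2)
    (γ : ℝ) :
    ‖gradient F w‖ ^ 2 * (γ - (β * γ ^ 2 / 2) * (1 / c' + 1))
      ≤ F w -
        (1 / (n : ℝ) ^ B) *
          ∑ s : Fin B → Fin n,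
            F (w - γ • ((1 / (B : ℝ)) • ∑ j, gradient (f (s j)) w)) := by
  have : Nonempty (Fin n) := ⟨⟨0, hn⟩⟩
  have hB0 : B ≠ 0 := by omega
  have hmean : ∇ F w = (n : ℝ)⁻¹ • ∑ i, ∇ (f i) w := by
    subst hF
    simpa only [one_div] using (hasGradientAt_const_mul_sum (fun i => hf i w) _).gradient
  have hdesc := mean_apply_sub_smul_le_of_lipschitz_gradient hFdiff hsmooth w γ
    fun s : Fin B → Fin n => (B : ℝ)⁻¹ • ∑ j, ∇ (f (s j)) w
  rw [mean_batch_mean (fun i => ∇ (f i) w) hB0, mean_norm_batch_mean_sq (fun i => ∇ (f i) w) hB0,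
    Fintype.card_fun] at hdesc
  simp only [Fintype.card_fin, Nat.cast_pow, ← hmean, real_inner_self_eq_norm_sq] at hdesc
  simp only [one_div] at hBc ⊢
  set M2 := (n : ℝ)⁻¹ * ∑ i, ‖∇ (f i) w‖ ^ 2
  set g2 := ‖∇ F w‖ ^ 2
  have hvar : (B : ℝ)⁻¹ * (M2 - g2) ≤ c'⁻¹ * g2 := by
    calc (B : ℝ)⁻¹ * (M2 - g2) ≤ (B : ℝ)⁻¹ * M2 := by gcongr; exact sub_le_self _ (by positivity)
      _ = (B * c')⁻¹ * (c' * M2) := by field_simp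
      _ ≤ (B * c')⁻¹ * (B * g2) := by gcongr
      _ = c'⁻¹ * g2 := by field_simp
  linarith [mul_le_mul_of_nonneg_left hvar (by positivity : 0 ≤ β * γ ^ 2 / 2)]

/-- For `F` β-smooth, if the batch size satisfies `B‖∇F(w)‖² ≥ c' M²(w)`,
then `‖∇F(w)‖²(γ − (βγ²/2)(1/c' + 1)) ≤ F(w) − E_s[F(w − γ g_s(w))]`. -/
theorem minibatch_smooth_descent
    (d n B : ℕ) (hd : 1 ≤ d) (hn : 1 ≤ n) (hB : 1 ≤ B)
    (f : Fin n → EuclideanSpace ℝ (Fin d) → ℝ)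
    (hf : ∀ i, Differentiable ℝ (f i))
    (F : EuclideanSpace ℝ (Fin d) → ℝ)
    (hF : F = fun w => (1 / (n : ℝ)) * ∑ i, f i w)
    (β : ℝ) (hβ : 0 < β)
    (hFdiff : Differentiable ℝ F)
    (hsmooth : ∀ x y, ‖gradient F x - gradient F y‖ ≤ β * ‖x - y‖)
    (c' : ℝ) (hc' : 0 < c')
    (w : EuclideanSpace ℝ (Fin d)) (hgrad : gradient F w ≠ 0)
    (hBc : c' * ((1 / (n : ℝ)) * ∑ i, ‖gradient (f i) w‖ ^ 2)
            ≤ (B : ℝ) * ‖gradient F w‖ ^ 2)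
    (γ : ℝ) (hγ : 0 < γ) :
    ‖gradient F w‖ ^ 2 * (γ - (β * γ ^ 2 / 2) * (1 / c' + 1))
      ≤ F w -
        (1 / (n : ℝ) ^ B) *
          ∑ s : Fin B → Fin n,
            F (w - γ • ((1 / (B : ℝ)) • ∑ j, gradient (f (s j)) w)) :=
  minibatch_smooth_descent_general d n B hn hB f hf F hF β hβ hFdiff hsmooth c' hc' w hBc γ
end

section
/- Suppose F is differentiable and α-strongly convex (α > 0) with minimizer w*. Then for every w ∈ ℝ^d with w ≠ w* and ∇F(w) ≠ 0, the gradient diversity satisfies Δ(w) ≤ M²(w)/(α²·n·‖w − w*‖²). -/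
open scoped BigOperators RealInnerProductSpace

/-- If `F` is α-strongly convex with minimizer `w*`, then for every
`w ≠ w*` with `∇F(w) ≠ 0`, the gradient diversity satisfies
`Δ(w) ≤ M²(w)/(α² n ‖w − w*‖²)`. -/
theorem gradient_diversity_upper_bound
    (d n : ℕ) (hd : 1 ≤ d) (hn : 1 ≤ n)
    (f : Fin n → EuclideanSpace ℝ (Fin d) → ℝ)
    (hf : ∀ i, Differentiable ℝ (f i))
    (F : EuclideanSpace ℝ (Fin d) → ℝ)
    (hF : F = fun w => (1 / (n : ℝ)) * ∑ i, f i w)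
    (hFdiff : Differentiable ℝ F)
    (α : ℝ) (hα : 0 < α)
    (hsc : ∀ x y, F x + ⟪gradient F x, y - x⟫ + (α / 2) * ‖y - x‖ ^ 2 ≤ F y)
    (wstar : EuclideanSpace ℝ (Fin d)) (hmin : ∀ v, F wstar ≤ F v)
    (w : EuclideanSpace ℝ (Fin d)) (hw : w ≠ wstar)
    (hgrad : gradient F w ≠ 0) :
    (∑ i, ‖gradient (f i) w‖ ^ 2) / ‖∑ i, gradient (f i) w‖ ^ 2
      ≤ ((1 / (n : ℝ)) * ∑ i, ‖gradient (f i) w‖ ^ 2) /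
          (α ^ 2 * (n : ℝ) * ‖w - wstar‖ ^ 2) := by
  have hn0 : (0 : ℝ) < (n : ℝ) := by exact_mod_cast hn
  set r : ℝ := ‖w - wstar‖ with hr
  have hrpos : 0 < r := by
    rw [hr, norm_pos_iff]
    exact sub_ne_zero.2 hw
  -- gradient at the minimizer vanishes
  have hgstar : gradient F wstar = 0 := by
    have h : IsLocalMin F wstar := (isMinOn_univ_iff.2 hmin).isLocalMin (by simp)
    simp [gradient, h.fderiv_eq_zero]
  -- strong convexity gives α r ≤ ‖∇F w‖
  have h1 := hsc w wstar
  have h2 := hsc wstar w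
  rw [hgstar] at h2
  simp only [inner_zero_left, add_zero] at h2
  have hinner : α * r ^ 2 ≤ ⟪gradient F w, w - wstar⟫ := by
    have hrev : ‖wstar - w‖ = r := by rw [hr, norm_sub_rev]
    have h3 : ⟪gradient F w, wstar - w⟫ = -⟪gradient F w, w - wstar⟫ := by
      rw [← inner_neg_right, neg_sub]
    rw [hrev, h3] at h1
    nlinarith [h1, h2]
  have hlow : α * r ≤ ‖gradient F w‖ := by
    have hcs : ⟪gradient F w, w - wstar⟫ ≤ ‖gradient F w‖ * r :=
      real_inner_le_norm _ _
    nlinarith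
  -- gradient of F is the average of the gradients
  have hgF : gradient F w = (1 / (n : ℝ)) • ∑ i, gradient (f i) w := by
    have hfd : fderiv ℝ F w = (1 / (n : ℝ)) • ∑ i, fderiv ℝ (f i) w := by
      rw [hF]
      rw [fderiv_const_mul (DifferentiableAt.fun_sum fun i _ => (hf i).differentiableAt)]
      rw [fderiv_fun_sum fun i _ => (hf i).differentiableAt]
    simp only [gradient, hfd, map_smul, map_sum]
  have hsum : ∑ i, gradient (f i) w = (n : ℝ) • gradient F w := by
    rw [hgF, smul_smul]
    rw [mul_one_div, div_self (ne_of_gt hn0), one_smul]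
  have hnormsum : ‖∑ i, gradient (f i) w‖ = (n : ℝ) * ‖gradient F w‖ := by
    rw [hsum, norm_smul, Real.norm_eq_abs, abs_of_pos hn0]
  -- key denominator bound
  have hkey : α ^ 2 * (n : ℝ) ^ 2 * r ^ 2 ≤ ‖∑ i, gradient (f i) w‖ ^ 2 := by
    rw [hnormsum]
    have h4 : (α * r) * (α * r) ≤ ‖gradient F w‖ * ‖gradient F w‖ :=
      mul_le_mul hlow hlow (by positivity) (norm_nonneg _)
    nlinarith [h4, sq_nonneg ((n : ℝ))]
  have hSnonneg : (0 : ℝ) ≤ ∑ i, ‖gradient (f i) w‖ ^ 2 :=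
    Finset.sum_nonneg fun i _ => sq_nonneg _
  have hdenpos : (0 : ℝ) < α ^ 2 * (n : ℝ) ^ 2 * r ^ 2 := by positivity
  have hmain : (∑ i, ‖gradient (f i) w‖ ^ 2) / ‖∑ i, gradient (f i) w‖ ^ 2
      ≤ (∑ i, ‖gradient (f i) w‖ ^ 2) / (α ^ 2 * (n : ℝ) ^ 2 * r ^ 2) :=
    div_le_div_of_nonneg_left hSnonneg hdenpos hkey
  have heq : ((1 / (n : ℝ)) * ∑ i, ‖gradient (f i) w‖ ^ 2) /
      (α ^ 2 * (n : ℝ) * r ^ 2)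
      = (∑ i, ‖gradient (f i) w‖ ^ 2) / (α ^ 2 * (n : ℝ) ^ 2 * r ^ 2) := by
    have hne1 : α ^ 2 * (n : ℝ) * r ^ 2 ≠ 0 := by positivity
    have hne2 : α ^ 2 * (n : ℝ) ^ 2 * r ^ 2 ≠ 0 := by positivity
    rw [div_eq_div_iff hne1 hne2]
    field_simp
  rw [heq]
  exact hmain
end
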